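/- Let (φ, (t_u)_{u∈𝔞*}) be a representation of X on a C*-algebra A, and for n ∈ ℕ let g_n ∈ l∞(X) be the function g_n(x) = #σ⁻ⁿ({σⁿ(x)}) (the number of y ∈ X with σⁿ(y) = σⁿ(x)). Then g_n belongs to D_X, g_n is invertible in D_X (with inverse the pointwise reciprocal), and Σ_{u,v∈𝔞ⁿ} t_u t_v* t_v t_u* = φ(g_n). -/

import Mathlib

open scoped ENNReal
open Classical
set_option linter.unusedSectionVars false
set_option synthInstance.maxHeartbeats 1000000
set_option maxHeartbeats 1000000

noncomputable section

variable {𝔞 : Type*} [Fintype 𝔞] [Nonempty 𝔞] [TopologicalSpace 𝔞] [DiscreteTopology 𝔞]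

/-- The one-sided shift map on the full one-sided shift `𝔞^ℕ`. -/
def shift (x : ℕ → 𝔞) : ℕ → 𝔞 := fun n => x (n + 1)

/-- Concatenation `u x` of a finite word `u` with an infinite sequence `x`. -/
def wcat (u : List 𝔞) (x : ℕ → 𝔞) : ℕ → 𝔞 := fun n =>
  if h : n < u.length then u.get ⟨n, h⟩ else x (n - u.length)

/-- `l∞(X)`: the C*-algebra of bounded complex-valued functions on `X`,
with pointwise operations and the supremum norm. -/
abbrev Linf (X : Set (ℕ → 𝔞)) : Type _ := lp (fun _ : X => ℂ) ∞

/-- The set `C(u,v) = {vx : x ∈ X, vx ∈ X, ux ∈ X}`. -/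
def cyl (X : Set (ℕ → 𝔞)) (u v : List 𝔞) : Set (ℕ → 𝔞) :=
  {y | ∃ x, x ∈ X ∧ wcat u x ∈ X ∧ wcat v x ∈ X ∧ y = wcat v x}

/-- The indicator function of a subset `S`, as an element of `l∞(X)`. -/
def chi (X S : Set (ℕ → 𝔞)) : Linf X :=
  ⟨fun x => S.indicator (fun _ => (1 : ℂ)) (x : ℕ → 𝔞),
    memℓp_infty ⟨1, by
      rintro r ⟨x, rfl⟩
      by_cases h : (x : ℕ → 𝔞) ∈ S <;> simp [Set.indicator_apply, h]⟩⟩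

/-- `D_X`: the smallest C*-subalgebra (norm-closed, star-closed subalgebra) of `l∞(X)`
containing the indicator functions `χ_{C(u,v)}` for all words `u, v`. -/
def Dalg (X : Set (ℕ → 𝔞)) : NonUnitalStarSubalgebra ℂ (Linf X) :=
  (NonUnitalStarAlgebra.adjoin ℂ
    {f : Linf X | ∃ u v : List 𝔞, f = chi X (cyl X u v)}).topologicalClosure

lemma chi_cyl_mem_Dalg (X : Set (ℕ → 𝔞)) (u v : List 𝔞) : chi X (cyl X u v) ∈ Dalg X :=
  (NonUnitalStarAlgebra.adjoin ℂ _).le_topologicalClosure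
    (NonUnitalStarAlgebra.subset_adjoin ℂ _ ⟨u, v, rfl⟩)

lemma shift_iterate (n : ℕ) (x : ℕ → 𝔞) : shift^[n] x = fun m => x (m + n) := by
  induction n with
  | zero => funext m; simp
  | succ k ih =>
    rw [Function.iterate_succ_apply', ih]
    funext m
    simp only [shift]
    congr 1
    omega

/-- The set `σ⁻ⁿ({σⁿ(x)})` of points of `X` with the same `n`-th shift as `x`. -/
def sigPre (X : Set (ℕ → 𝔞)) (n : ℕ) (x : ℕ → 𝔞) : Set X :=
  {y : X | shift^[n] (y : ℕ → 𝔞) = shift^[n] x}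

lemma sigPre_ncard_le (X : Set (ℕ → 𝔞)) (n : ℕ) (x : ℕ → 𝔞) :
    (sigPre X n x).ncard ≤ Fintype.card (Fin n → 𝔞) := by
  have hinj : Set.InjOn (fun y : X => fun i : Fin n => (y : ℕ → 𝔞) (i : ℕ)) (sigPre X n x) := by
    intro y hy z hz hyz
    apply Subtype.ext
    funext m
    rcases lt_or_ge m n with hm | hm
    · exact congrFun hyz ⟨m, hm⟩
    · have hy' : shift^[n] (y : ℕ → 𝔞) = shift^[n] x := hy
      have hz' : shift^[n] (z : ℕ → 𝔞) = shift^[n] x := hz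
      have e := hy'.trans hz'.symm
      rw [shift_iterate, shift_iterate] at e
      have h1 := congrFun e (m - n)
      try simp only at h1
      rwa [Nat.sub_add_cancel hm] at h1
  calc (sigPre X n x).ncard ≤ (Set.univ : Set (Fin n → 𝔞)).ncard :=
        Set.ncard_le_ncard_of_injOn _ (fun y _ => Set.mem_univ _) hinj Set.finite_univ
  _ = Fintype.card (Fin n → 𝔞) := by rw [Set.ncard_univ, Nat.card_eq_fintype_card]

/-- The function `g_n(x) = #σ⁻ⁿ({σⁿ(x)})`, as an element of `l∞(X)`. -/
def gnFun (X : Set (ℕ → 𝔞)) (n : ℕ) : Linf X :=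
  ⟨fun x => ((sigPre X n (x : ℕ → 𝔞)).ncard : ℂ),
    memℓp_infty ⟨(Fintype.card (Fin n → 𝔞) : ℝ), by
      rintro r ⟨x, rfl⟩
      dsimp only
      rw [Complex.norm_natCast]
      exact_mod_cast sigPre_ncard_le X n x⟩⟩

/-- The pointwise reciprocal `x ↦ (#σ⁻ⁿ({σⁿ(x)}))⁻¹`, as an element of `l∞(X)`. -/
def gnInvFun (X : Set (ℕ → 𝔞)) (n : ℕ) : Linf X :=
  ⟨fun x => (((sigPre X n (x : ℕ → 𝔞)).ncard : ℂ))⁻¹,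
    memℓp_infty ⟨1, by
      rintro r ⟨x, rfl⟩
      dsimp only
      rw [norm_inv, Complex.norm_natCast]
      rcases Nat.eq_zero_or_pos (sigPre X n (x : ℕ → 𝔞)).ncard with h | h
      · simp [h]
      · rw [inv_le_one_iff₀]
        right
        exact_mod_cast h⟩⟩

/-! A point `x ∈ X` lies in `C(d, c)`, with `|c| = |d| = n`, exactly when `c` is the prefix of
length `n` of `x` and `d σⁿx ∈ X`. Summing over `c` and `d` therefore counts the words `d` with
`d σⁿx ∈ X`, which are in bijection with `σ⁻ⁿ({σⁿx})` via `d ↦ d σⁿx`; so `g_n` is a finite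
sum of generators of `D_X`, and applying `φ` gives the formula. Since `g_n` only takes the values
`1, …, |𝔞|ⁿ`, its reciprocal is `p ∘ g_n` for a Lagrange interpolation polynomial `p`, which
lies in `D_X` because `D_X` contains `1 = χ_{C(ε,ε)}`. -/

section PolynomialFunctionalCalculus

open Polynomial

variable {𝕜 ι : Type*} [NormedField 𝕜]

theorem lp.infty_coeFn_aeval (f : lp (fun _ : ι => 𝕜) ∞) (p : 𝕜[X]) :
    ⇑(aeval f p) = fun i => p.eval (f i) := by
  funext i
  have := congrFun (aeval_algHom_apply (lpInftySubalgebra 𝕜 (fun _ : ι => 𝕜)).val f p) i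
  exact this.symm.trans (aeval_pi_apply₂ (x := (f : ι → 𝕜)) p i)

theorem NonUnitalSubalgebra.aeval_mem_of_one_mem {R A : Type*} [CommSemiring R] [Semiring A]
    [Algebra R A] (S : NonUnitalSubalgebra R A) (h1 : (1 : A) ∈ S) {a : A} (ha : a ∈ S)
    (p : R[X]) : aeval a p ∈ S :=
  Algebra.adjoin_le (S := S.toSubmodule.toSubalgebra h1 fun _ _ => mul_mem (s := S))
    (Set.singleton_subset_iff.2 ha) (aeval_mem_adjoin_singleton R a)

theorem lp.mem_of_eq_comp_of_finite_range {S : NonUnitalSubalgebra 𝕜 (lp (fun _ : ι => 𝕜) ∞)}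
    (h1 : 1 ∈ S) {f g : lp (fun _ : ι => 𝕜) ∞} (hf : f ∈ S) (hfin : (Set.range f).Finite)
    (r : 𝕜 → 𝕜) (hg : ∀ i, g i = r (f i)) : g ∈ S := by
  convert S.aeval_mem_of_one_mem h1 hf (Lagrange.interpolate hfin.toFinset id r)
  ext i
  rw [lp.infty_coeFn_aeval, hg]
  exact (Lagrange.eval_interpolate_at_node r (Set.injOn_id _) (by simp)).symm

end PolynomialFunctionalCalculus

@[simp]
lemma wcat_nil (x : ℕ → 𝔞) : wcat [] x = x := by
  funext m
  simp [wcat]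

lemma shift_iterate_wcat {n : ℕ} {u : List 𝔞} (hu : u.length = n) (x : ℕ → 𝔞) :
    shift^[n] (wcat u x) = x := by
  subst hu
  funext m
  simp [shift_iterate, wcat]

lemma wcat_ofFn_apply {n : ℕ} (c : Fin n → 𝔞) (x : ℕ → 𝔞) (i : Fin n) :
    wcat (List.ofFn c) x i = c i := by
  simp [wcat]

lemma wcat_ofFn_shift_iterate (n : ℕ) (x : ℕ → 𝔞) :
    wcat (List.ofFn fun i : Fin n => x i) (shift^[n] x) = x := by
  funext m
  by_cases hm : m < n
  · simp [wcat, hm]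
  · simp [wcat, hm, shift_iterate, Nat.sub_add_cancel (not_lt.1 hm)]

lemma cyl_nil_nil (X : Set (ℕ → 𝔞)) : cyl X [] [] = X := by
  ext y
  simp [cyl]

lemma mem_cyl_ofFn_iff {X : Set (ℕ → 𝔞)} (hXinv : ∀ x ∈ X, shift x ∈ X) {n : ℕ}
    (u : List 𝔞) (d : Fin n → 𝔞) {x : ℕ → 𝔞} (hx : x ∈ X) :
    x ∈ cyl X u (List.ofFn d) ↔ (d = fun i : Fin n => x i) ∧ wcat u (shift^[n] x) ∈ X := by
  constructor
  · rintro ⟨z, -, hu, -, rfl⟩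
    refine ⟨funext fun i => (wcat_ofFn_apply d z i).symm, ?_⟩
    rwa [shift_iterate_wcat List.length_ofFn]
  · rintro ⟨rfl, hu⟩
    refine ⟨shift^[n] x, Set.MapsTo.iterate hXinv n hx, hu, ?_, ?_⟩ <;>
      rw [wcat_ofFn_shift_iterate]
    exact hx

lemma ncard_sigPre_eq_card (X : Set (ℕ → 𝔞)) (n : ℕ) (x : ℕ → 𝔞) :
    (sigPre X n x).ncard =
      (Finset.univ.filter fun d : Fin n → 𝔞 => wcat (List.ofFn d) (shift^[n] x) ∈ X).card := by
  rw [← Set.ncard_coe_finset, Finset.coe_filter]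
  refine Set.ncard_congr (fun y _ i => (y : ℕ → 𝔞) i) ?_ ?_ ?_
  · rintro ⟨y, hy⟩ (hyx : shift^[n] y = shift^[n] x)
    simpa [← hyx, wcat_ofFn_shift_iterate] using hy
  · intro y z (hyx : shift^[n] y.1 = shift^[n] x) (hzx : shift^[n] z.1 = shift^[n] x) hyz
    rw [Subtype.ext_iff, ← wcat_ofFn_shift_iterate n y.1, ← wcat_ofFn_shift_iterate n z.1, hyx, hzx]
    exact congrArg₂ _ (congrArg _ hyz) rfl
  · intro d hd
    exact ⟨⟨_, hd.2⟩, shift_iterate_wcat List.length_ofFn _, funext (wcat_ofFn_apply d _)⟩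

lemma ncard_sigPre_pos (X : Set (ℕ → 𝔞)) (n : ℕ) (x : X) : 0 < (sigPre X n (x : ℕ → 𝔞)).ncard := by
  rw [ncard_sigPre_eq_card, Finset.card_pos]
  exact ⟨fun i => (x : ℕ → 𝔞) i, by simp [wcat_ofFn_shift_iterate]⟩

lemma chi_apply (X S : Set (ℕ → 𝔞)) (x : X) :
    chi X S x = if (x : ℕ → 𝔞) ∈ S then 1 else 0 := by
  show S.indicator (fun _ => (1 : ℂ)) (x : ℕ → 𝔞) = _
  rw [Set.indicator_apply]

lemma chi_self (X : Set (ℕ → 𝔞)) : chi X X = 1 := by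
  ext x
  simp [chi_apply, lp.infty_coeFn_one]

lemma one_mem_Dalg (X : Set (ℕ → 𝔞)) : (1 : Linf X) ∈ Dalg X := by
  simpa [cyl_nil_nil, chi_self] using chi_cyl_mem_Dalg X [] []

lemma gnFun_apply (X : Set (ℕ → 𝔞)) (n : ℕ) (x : X) :
    gnFun X n x = (sigPre X n (x : ℕ → 𝔞)).ncard :=
  rfl

lemma gnInvFun_apply (X : Set (ℕ → 𝔞)) (n : ℕ) (x : X) :
    gnInvFun X n x = ((sigPre X n (x : ℕ → 𝔞)).ncard : ℂ)⁻¹ :=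
  rfl

lemma gnFun_eq_sum_chi_cyl (X : Set (ℕ → 𝔞)) (hXinv : ∀ x ∈ X, shift x ∈ X) (n : ℕ) :
    gnFun X n = ∑ c : Fin n → 𝔞, ∑ d : Fin n → 𝔞, chi X (cyl X (List.ofFn d) (List.ofFn c)) := by
  ext x
  simp only [lp.coeFn_sum, Finset.sum_apply, chi_apply, mem_cyl_ofFn_iff hXinv _ _ x.2, ite_and,
    gnFun_apply, ncard_sigPre_eq_card]
  rw [Finset.sum_comm]
  simp

lemma gnFun_mem_Dalg (X : Set (ℕ → 𝔞)) (hXinv : ∀ x ∈ X, shift x ∈ X) (n : ℕ) :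
    gnFun X n ∈ Dalg X := by
  rw [gnFun_eq_sum_chi_cyl X hXinv n]
  exact sum_mem fun c _ => sum_mem fun d _ => chi_cyl_mem_Dalg X _ _

lemma gnFun_mul_gnInvFun (X : Set (ℕ → 𝔞)) (n : ℕ) : gnFun X n * gnInvFun X n = 1 := by
  ext x
  rw [lp.infty_coeFn_mul, Pi.mul_apply, gnFun_apply, gnInvFun_apply, lp.infty_coeFn_one,
    Pi.one_apply, mul_inv_cancel₀ (Nat.cast_ne_zero.2 (ncard_sigPre_pos X n x).ne')]

lemma gnInvFun_mem_Dalg (X : Set (ℕ → 𝔞)) (hXinv : ∀ x ∈ X, shift x ∈ X) (n : ℕ) :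
    gnInvFun X n ∈ Dalg X := by
  refine lp.mem_of_eq_comp_of_finite_range (S := (Dalg X).toNonUnitalSubalgebra)
    (one_mem_Dalg X) (gnFun_mem_Dalg X hXinv n) ?_ (·⁻¹) (gnInvFun_apply X n)
  refine ((Set.finite_Iic (Fintype.card (Fin n → 𝔞))).image Nat.cast).subset ?_
  rintro _ ⟨x, rfl⟩
  exact ⟨_, sigPre_ncard_le X n x, rfl⟩

theorem rep_gn_general (X : Set (ℕ → 𝔞))
    (hXinv : ∀ x ∈ X, shift x ∈ X)
    {A : Type*} [NormedRing A] [StarRing A] [NormedAlgebra ℂ A]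
    (φ : Dalg X →⋆ₙₐ[ℂ] A) (t : List 𝔞 → A)
    (hrep : ∀ u v : List 𝔞,
      φ ⟨chi X (cyl X u v), chi_cyl_mem_Dalg X u v⟩ = t v * star (t u) * (t u * star (t v)))
    (n : ℕ) :
    ∃ (hg : gnFun X n ∈ Dalg X) (_ : gnInvFun X n ∈ Dalg X),
      gnFun X n * gnInvFun X n = 1 ∧ gnInvFun X n * gnFun X n = 1 ∧
      ∑ c : Fin n → 𝔞, ∑ d : Fin n → 𝔞,
          t (List.ofFn c) * star (t (List.ofFn d)) * (t (List.ofFn d) * star (t (List.ofFn c)))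
        = φ ⟨gnFun X n, hg⟩ := by
  refine ⟨gnFun_mem_Dalg X hXinv n, gnInvFun_mem_Dalg X hXinv n, gnFun_mul_gnInvFun X n,
    (mul_comm _ _).trans (gnFun_mul_gnInvFun X n), ?_⟩
  have hsum : (⟨gnFun X n, gnFun_mem_Dalg X hXinv n⟩ : Dalg X) = ∑ c : Fin n → 𝔞, ∑ d : Fin n → 𝔞,
      ⟨chi X (cyl X (List.ofFn d) (List.ofFn c)), chi_cyl_mem_Dalg X _ _⟩ := by
    ext1
    simpa only [AddSubmonoidClass.coe_finsetSum] using gnFun_eq_sum_chi_cyl X hXinv n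
  simp only [hsum, map_sum, hrep]

/-- for a representation `(φ, (t_u)_u)` of `X` on a C*-algebra `A` and
`n ∈ ℕ`, the function `g_n(x) = #σ⁻ⁿ({σⁿ(x)})` belongs to `D_X`, is invertible in `D_X`
with inverse the pointwise reciprocal, and `Σ_{u,v∈𝔞ⁿ} t_u t_v* t_v t_u* = φ(g_n)`
(words of length `n` are parametrized by `Fin n → 𝔞` via `List.ofFn`). -/
theorem rep_gn (X : Set (ℕ → 𝔞)) (hXclosed : IsClosed X)
    (hXinv : ∀ x ∈ X, shift x ∈ X)
    {A : Type*} [NormedRing A] [StarRing A] [CStarRing A] [NormedAlgebra ℂ A]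
    [StarModule ℂ A] [CompleteSpace A]
    (φ : Dalg X →⋆ₙₐ[ℂ] A) (t : List 𝔞 → A)
    (hmul : ∀ u v : List 𝔞, t u * t v = t (u ++ v))
    (hrep : ∀ u v : List 𝔞,
      φ ⟨chi X (cyl X u v), chi_cyl_mem_Dalg X u v⟩ = t v * star (t u) * (t u * star (t v)))
    (n : ℕ) :
    ∃ (hg : gnFun X n ∈ Dalg X) (_ : gnInvFun X n ∈ Dalg X),
      gnFun X n * gnInvFun X n = 1 ∧ gnInvFun X n * gnFun X n = 1 ∧
      ∑ c : Fin n → 𝔞, ∑ d : Fin n → 𝔞,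
          t (List.ofFn c) * star (t (List.ofFn d)) * (t (List.ofFn d) * star (t (List.ofFn c)))
        = φ ⟨gnFun X n, hg⟩ :=
  rep_gn_general X hXinv φ t hrep n

end
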